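/- arXiv:2505.22972 — 6 statements merged into one kernel-verified Lean document; each statement's English description precedes it below -/
import Mathlib

section
/- Let τ, λ be real numbers with λ - τ - 1 > 0 and -1 < τ ≤ 0. Then for every positive integer n, Σ_{m=1}^∞ m^τ/(m+n)^λ ≤ n^(τ+1-λ) · B(τ+1, λ-τ-1), where B is the Beta function. -/
/-!
For `τ ≤ 0` the function `x ↦ x ^ τ / (x + n) ^ λ` is antitone on `(0, ∞)`, so each term of the
series is at most the integral of this function over the unit interval `(m, m + 1]` to its left,
and the series is bounded by the integral over `(0, ∞)`. The substitution `x = n t` turns that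
integral into `n ^ (τ + 1 - λ)` times the integral defining `B(τ + 1, λ - τ - 1)`.
-/

open MeasureTheory

noncomputable def betaFn (x y : ℝ) : ℝ :=
  ∫ t in Set.Ioi (0:ℝ), t ^ (x - 1) / (1 + t) ^ (x + y)

open Set

lemma iUnion_Ioc_natCast_add_one : ⋃ m : ℕ, Ioc (m : ℝ) (m + 1) = Ioi 0 := by
  have unbounded : ¬BddAbove (range ((↑) : ℕ → ℝ)) := fun ⟨b, hb⟩ ↦
    (exists_nat_gt b).elim fun n hn ↦ (hb (mem_range_self n)).not_gt hn
  simpa using iUnion_Ioc_map_succ_eq_Ioi (f := ((↑) : ℕ → ℝ)) (by simp) unbounded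

lemma hasSum_integral_Ioc_natCast_add_one {f : ℝ → ℝ} (hf : IntegrableOn f (Ioi 0)) :
    HasSum (fun m : ℕ ↦ ∫ x in Ioc (m : ℝ) (m + 1), f x) (∫ x in Ioi 0, f x) := by
  rw [← iUnion_Ioc_natCast_add_one] at hf ⊢
  refine hasSum_integral_iUnion (fun _ ↦ measurableSet_Ioc) ?_ hf
  simpa using (Nat.mono_cast (α := ℝ)).pairwise_disjoint_on_Ioc_succ

/-- Unlike `AntitoneOn.tsum_add_one_le_integral`, this only asks for antitonicity on the open
half-line, as needed for `x ^ τ` with `τ < 0`, whose junk value at `0` is `0`. -/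
lemma AntitoneOn.tsum_add_one_le_integral_Ioi {f : ℝ → ℝ} (anti : AntitoneOn f (Ioi 0))
    (integrable : IntegrableOn f (Ioi 0)) (nonneg : ∀ x ∈ Ioi 0, 0 ≤ f x) :
    ∑' m : ℕ, f (m + 1) ≤ ∫ x in Ioi 0, f x := by
  have hsum := hasSum_integral_Ioc_natCast_add_one integrable
  have hle (m : ℕ) : f (m + 1) ≤ ∫ x in Ioc (m : ℝ) (m + 1), f x := by
    have hsub : Ioc (m : ℝ) (m + 1) ⊆ Ioi 0 := fun x hx ↦ (Nat.cast_nonneg m).trans_lt hx.1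
    simpa using setIntegral_ge_of_const_le_real measurableSet_Ioc (by simp)
      (fun x hx ↦ anti (hsub hx) (hsub (right_mem_Ioc.2 (lt_add_one _))) hx.2)
      (integrable.mono_set hsub)
  have hnonneg (m : ℕ) : 0 ≤ f (m + 1) := nonneg _ (mem_Ioi.2 (Nat.cast_add_one_pos m))
  rw [← hsum.tsum_eq]
  exact (Summable.of_nonneg_of_le hnonneg hle hsum.summable).tsum_le_tsum hle hsum.summable

section

variable {a b c : ℝ}

lemma antitoneOn_rpow_div_add_rpow (ha : a ≤ 0) (hb : 0 ≤ b) (hc : 0 ≤ c) :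
    AntitoneOn (fun x : ℝ ↦ x ^ a / (x + c) ^ b) (Ioi 0) :=
  fun x (hx : 0 < x) y (hy : 0 < y) hxy ↦
  div_le_div₀ (by positivity) (Real.rpow_le_rpow_of_nonpos hx hxy ha) (by positivity)
    (Real.rpow_le_rpow (by positivity) (by linarith) hb)

lemma integrableOn_rpow_div_add_rpow_Ioi (ha : -1 < a) (hab : a - b < -1) (hc : 0 < c) :
    IntegrableOn (fun x : ℝ ↦ x ^ a / (x + c) ^ b) (Ioi 0) := by
  have hb : 0 ≤ b := by linarith
  have hmeas : AEStronglyMeasurable (fun x : ℝ ↦ x ^ a / (x + c) ^ b) :=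
    (by fun_prop : Measurable fun x : ℝ ↦ x ^ a / (x + c) ^ b).aestronglyMeasurable
  have near_zero : IntegrableOn (fun x : ℝ ↦ x ^ a / (x + c) ^ b) (Ioc 0 1) := by
    have hpow : IntegrableOn (fun x : ℝ ↦ x ^ a) (Ioc 0 1) :=
      (intervalIntegrable_iff_integrableOn_Ioc_of_le zero_le_one).1
        (intervalIntegral.intervalIntegrable_rpow' ha)
    refine (hpow.div_const (c ^ b)).mono' hmeas.restrict ?_
    refine (ae_restrict_iff' measurableSet_Ioc).2 (.of_forall fun x hx ↦ ?_)
    rw [Real.norm_of_nonneg (by have := hx.1; positivity)]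
    exact div_le_div_of_nonneg_left (by have := hx.1; positivity) (by positivity)
      (Real.rpow_le_rpow hc.le (by linarith [hx.1]) hb)
  have near_top : IntegrableOn (fun x : ℝ ↦ x ^ a / (x + c) ^ b) (Ioi 1) := by
    refine (integrableOn_Ioi_rpow_of_lt hab one_pos).mono' hmeas.restrict ?_
    refine (ae_restrict_iff' measurableSet_Ioi).2 (.of_forall fun x (hx : 1 < x) ↦ ?_)
    have hx0 : 0 < x := one_pos.trans hx
    rw [Real.norm_of_nonneg (by positivity), Real.rpow_sub hx0]
    exact div_le_div_of_nonneg_left (by positivity) (by positivity)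
      (Real.rpow_le_rpow hx0.le (by linarith) hb)
  simpa [Ioc_union_Ioi_eq_Ioi zero_le_one] using near_zero.union near_top

lemma integral_rpow_div_add_rpow_Ioi (hc : 0 < c) :
    ∫ x in Ioi 0, x ^ a / (x + c) ^ b = c ^ (a + 1 - b) * ∫ t in Ioi 0, t ^ a / (1 + t) ^ b := by
  have hscale : ∀ t ∈ Ioi (0 : ℝ),
      (c * t) ^ a / (c * t + c) ^ b = c ^ (a - b) * (t ^ a / (1 + t) ^ b) := by
    intro t (ht : 0 < t)
    rw [show c * t + c = c * (1 + t) by ring, Real.mul_rpow hc.le ht.le,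
      Real.mul_rpow hc.le (by positivity), Real.rpow_sub hc]
    field_simp
  have := integral_comp_mul_left_Ioi (fun x : ℝ ↦ x ^ a / (x + c) ^ b) 0 hc
  rw [mul_zero, setIntegral_congr_fun measurableSet_Ioi hscale, integral_const_mul,
    smul_eq_mul, eq_inv_mul_iff_mul_eq₀ hc.ne'] at this
  rw [← this, add_sub_right_comm, Real.rpow_add_one hc.ne', mul_comm _ c, mul_assoc]

end

theorem stmt_2 (tau lam : ℝ) (h1 : 0 < lam - tau - 1) (h2 : -1 < tau) (h3 : tau ≤ 0)
    (n : ℕ) (hn : 1 ≤ n) :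
    ∑' m : ℕ, ((m : ℝ) + 1) ^ tau / (((m : ℝ) + 1) + (n : ℝ)) ^ lam ≤
      (n : ℝ) ^ (tau + 1 - lam) * betaFn (tau + 1) (lam - tau - 1) := by
  have hn0 : (0 : ℝ) < n := by exact_mod_cast hn
  have hbeta : betaFn (tau + 1) (lam - tau - 1) = ∫ t in Ioi 0, t ^ tau / (1 + t) ^ lam := by
    rw [betaFn, add_sub_cancel_right, show tau + 1 + (lam - tau - 1) = lam by ring]
  rw [hbeta, ← integral_rpow_div_add_rpow_Ioi hn0]
  exact (antitoneOn_rpow_div_add_rpow h3 (by linarith) hn0.le).tsum_add_one_le_integral_Ioi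
    (integrableOn_rpow_div_add_rpow_Ioi h2 (by linarith) hn0)
    (fun x (hx : 0 < x) ↦ by positivity)
end

section
/- Let λ, μ, ν, α be real numbers. Then sup over positive integers m, n of m^(μ-α) n^ν / (m+n)^λ is finite if and only if λ ≥ μ + ν - α, λ ≥ ν, and λ ≥ μ - α. -/
open Real

private lemma aux_two (lam t s : ℝ) (ht : 0 < t) (hts : t ≤ s) (hs2 : s ≤ 2 * t) :
    s ^ lam ≤ 2 ^ |lam| * t ^ lam ∧ t ^ lam ≤ 2 ^ |lam| * s ^ lam := by
  have hs : 0 < s := lt_of_lt_of_le ht hts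
  rcases le_or_gt 0 lam with hl | hl
  · have habs : |lam| = lam := abs_of_nonneg hl
    constructor
    · calc s ^ lam ≤ (2 * t) ^ lam := Real.rpow_le_rpow hs.le hs2 hl
        _ = 2 ^ lam * t ^ lam := Real.mul_rpow (by norm_num) ht.le
        _ = 2 ^ |lam| * t ^ lam := by rw [habs]
    · have h1 : t ^ lam ≤ s ^ lam := Real.rpow_le_rpow ht.le hts hl
      have h2 : (1 : ℝ) ≤ 2 ^ |lam| := Real.one_le_rpow (by norm_num) (abs_nonneg _)
      nlinarith [Real.rpow_nonneg hs.le lam]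
  · have habs : |lam| = -lam := abs_of_neg hl
    constructor
    · have h1 : s ^ lam ≤ t ^ lam := Real.rpow_le_rpow_of_nonpos ht hts hl.le
      have h2 : (1 : ℝ) ≤ 2 ^ |lam| := Real.one_le_rpow (by norm_num) (abs_nonneg _)
      nlinarith [Real.rpow_nonneg ht.le lam]
    · have h1 : (2 * t) ^ lam ≤ s ^ lam := Real.rpow_le_rpow_of_nonpos hs hs2 hl.le
      have h2 : (2 * t) ^ lam = 2 ^ lam * t ^ lam := Real.mul_rpow (by norm_num) ht.le
      have h3 : (2:ℝ) ^ |lam| * 2 ^ lam = 1 := by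
        rw [habs, ← Real.rpow_add (by norm_num)]; simp
      have h4 : (0:ℝ) < 2 ^ |lam| := Real.rpow_pos_of_pos (by norm_num) _
      calc t ^ lam = 2 ^ |lam| * (2 ^ lam * t ^ lam) := by
            rw [← mul_assoc, h3, one_mul]
        _ = 2 ^ |lam| * (2 * t) ^ lam := by rw [h2]
        _ ≤ 2 ^ |lam| * s ^ lam := by
            exact mul_le_mul_of_nonneg_left h1 h4.le

private lemma aux_unbdd (eps K : ℝ) (heps : 0 < eps)
    (h : ∀ n : ℕ, 1 ≤ n → (n : ℝ) ^ eps ≤ K) : False := by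
  have hK1 : (1 : ℝ) ≤ K := by
    have := h 1 le_rfl
    simpa using this
  have hK0 : (0 : ℝ) ≤ K := by linarith
  set x : ℝ := K ^ (1 / eps) with hx
  have hx1 : (1 : ℝ) ≤ x := Real.one_le_rpow hK1 (by positivity)
  set n : ℕ := ⌈x⌉₊ + 1 with hn
  have hnx : x < (n : ℝ) := by
    have := Nat.le_ceil x
    push_cast [hn]
    linarith
  have h1 : x ^ eps < (n : ℝ) ^ eps :=
    Real.rpow_lt_rpow (by linarith) hnx heps
  have h2 : x ^ eps = K := by
    rw [hx, ← Real.rpow_mul hK0, one_div_mul_cancel heps.ne', Real.rpow_one]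
  have h3 := h n (by omega)
  rw [h2] at h1
  linarith

private lemma aux_main (a b lam x y : ℝ) (hx : 1 ≤ x) (hxy : x ≤ y)
    (hb : b ≤ lam) (hab : a + b ≤ lam) :
    x ^ a * y ^ b / (x + y) ^ lam ≤ 2 ^ |lam| := by
  have hy : 1 ≤ y := le_trans hx hxy
  have hy0 : (0:ℝ) < y := by linarith
  have h1 : x ^ a ≤ y ^ max a 0 := by
    rcases le_or_gt 0 a with ha | ha
    · calc x ^ a ≤ y ^ a := Real.rpow_le_rpow (by linarith) hxy ha
        _ ≤ y ^ max a 0 := Real.rpow_le_rpow_of_exponent_le hy (le_max_left _ _)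
    · calc x ^ a ≤ x ^ (0:ℝ) := Real.rpow_le_rpow_of_exponent_le hx ha.le
        _ = y ^ (0:ℝ) := by simp
        _ ≤ y ^ max a 0 := Real.rpow_le_rpow_of_exponent_le hy (le_max_right _ _)
  have h2 : x ^ a * y ^ b ≤ y ^ lam := by
    calc x ^ a * y ^ b ≤ y ^ max a 0 * y ^ b :=
          mul_le_mul_of_nonneg_right h1 (Real.rpow_nonneg hy0.le _)
      _ = y ^ (max a 0 + b) := (Real.rpow_add hy0 _ _).symm
      _ ≤ y ^ lam := Real.rpow_le_rpow_of_exponent_le hy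
          (by rcases max_cases a 0 with ⟨h, _⟩ | ⟨h, _⟩ <;> rw [h] <;> linarith)
  have h3 : y ^ lam ≤ 2 ^ |lam| * (x + y) ^ lam :=
    (aux_two lam y (x + y) hy0 (by linarith) (by linarith)).2
  have h4 : (0:ℝ) < (x + y) ^ lam := Real.rpow_pos_of_pos (by linarith) _
  rw [div_le_iff₀ h4]
  calc x ^ a * y ^ b ≤ y ^ lam := h2
    _ ≤ 2 ^ |lam| * (x + y) ^ lam := h3

theorem stmt_6 (lam mu nu al : ℝ) :
    (∃ C : ℝ, ∀ m n : ℕ, 1 ≤ m → 1 ≤ n →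
        (m : ℝ) ^ (mu - al) * (n : ℝ) ^ nu / ((m : ℝ) + (n : ℝ)) ^ lam ≤ C) ↔
      (mu + nu - al ≤ lam ∧ nu ≤ lam ∧ mu - al ≤ lam) := by
  constructor
  · rintro ⟨C, hC⟩
    have habs : (0:ℝ) < 2 ^ |lam| := Real.rpow_pos_of_pos (by norm_num) _
    -- generic extraction: from x^e / s^lam ≤ C with t ≤ s ≤ 2t, t = x base
    have key : ∀ e : ℝ, (∀ n : ℕ, 1 ≤ n → (n:ℝ) ^ e / ((n:ℝ) + (n:ℝ)) ^ lam ≤ C ∨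
        (n:ℝ) ^ e / ((n:ℝ) + 1) ^ lam ≤ C) → e ≤ lam := by
      intro e he
      by_contra hlt
      push_neg at hlt
      refine aux_unbdd (e - lam) (C * 2 ^ |lam|) (by linarith) ?_
      intro n hn
      have hn1 : (1:ℝ) ≤ (n:ℝ) := by exact_mod_cast hn
      have hn0 : (0:ℝ) < (n:ℝ) := by linarith
      have hne : (0:ℝ) ≤ (n:ℝ) ^ e := Real.rpow_nonneg hn0.le _
      have step : ∀ s : ℝ, (n:ℝ) ≤ s → s ≤ 2 * n → (n:ℝ) ^ e / s ^ lam ≤ C →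
          (n:ℝ) ^ (e - lam) ≤ C * 2 ^ |lam| := by
        intro s hs1 hs2 hsC
        have hspos : (0:ℝ) < s ^ lam := Real.rpow_pos_of_pos (by linarith) _
        have h5 : s ^ lam ≤ 2 ^ |lam| * (n:ℝ) ^ lam := (aux_two lam n s hn0 hs1 hs2).1
        have h6 : (n:ℝ) ^ e ≤ C * s ^ lam := (div_le_iff₀ hspos).mp hsC
        have h7 : (n:ℝ) ^ e ≤ C * (2 ^ |lam| * (n:ℝ) ^ lam) := by
          have hC0 : (0:ℝ) ≤ C := by
            nlinarith [Real.rpow_pos_of_pos hn0 e]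
          calc (n:ℝ) ^ e ≤ C * s ^ lam := h6
            _ ≤ C * (2 ^ |lam| * (n:ℝ) ^ lam) := by
                exact mul_le_mul_of_nonneg_left h5 hC0
        have h8 : (n:ℝ) ^ (e - lam) = (n:ℝ) ^ e * (n:ℝ) ^ (-lam) := by
          rw [← Real.rpow_add hn0]; ring_nf
        have h9 : (0:ℝ) < (n:ℝ) ^ (-lam) := Real.rpow_pos_of_pos hn0 _
        have h10 : (n:ℝ) ^ lam * (n:ℝ) ^ (-lam) = 1 := by
          rw [← Real.rpow_add hn0]; simp
        calc (n:ℝ) ^ (e - lam) = (n:ℝ) ^ e * (n:ℝ) ^ (-lam) := h8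
          _ ≤ C * (2 ^ |lam| * (n:ℝ) ^ lam) * (n:ℝ) ^ (-lam) :=
              mul_le_mul_of_nonneg_right h7 h9.le
          _ = C * 2 ^ |lam| * ((n:ℝ) ^ lam * (n:ℝ) ^ (-lam)) := by ring
          _ = C * 2 ^ |lam| := by rw [h10, mul_one]
      rcases he n hn with h | h
      · exact step _ (by linarith) (by linarith) h
      · exact step _ (by linarith) (by linarith) h
    refine ⟨?_, ?_, ?_⟩
    · refine key (mu + nu - al) (fun n hn => Or.inl ?_)
      have hn1 : (1:ℝ) ≤ (n:ℝ) := by exact_mod_cast hn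
      have hn0 : (0:ℝ) < (n:ℝ) := by linarith
      have := hC n n hn hn
      rwa [← Real.rpow_add hn0, show mu - al + nu = mu + nu - al by ring] at this
    · refine key nu (fun n hn => Or.inr ?_)
      have := hC 1 n le_rfl hn
      simpa [add_comm] using this
    · refine key (mu - al) (fun n hn => Or.inr ?_)
      have := hC n 1 hn le_rfl
      simpa using this
  · rintro ⟨h1, h2, h3⟩
    refine ⟨2 ^ |lam|, fun m n hm hn => ?_⟩
    have hm1 : (1:ℝ) ≤ (m:ℝ) := by exact_mod_cast hm
    have hn1 : (1:ℝ) ≤ (n:ℝ) := by exact_mod_cast hn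
    rcases le_total (m:ℝ) (n:ℝ) with h | h
    · exact aux_main (mu - al) nu lam _ _ hm1 h h2 (by linarith)
    · have := aux_main nu (mu - al) lam (n:ℝ) (m:ℝ) hn1 h h3 (by linarith)
      rwa [mul_comm, add_comm] at this
end

section
/- Let λ, μ, ν be real numbers with μ > -1. Then sup over positive integers n of Σ_{m=1}^∞ m^μ n^ν / (m+n)^λ is finite if and only if λ ≥ μ + ν + 1 and λ > μ + 1. -/
/-!
Write `a(n, m)` for the summand. Since `m + n + 2` dominates both `m + 1` and `n + 1`, for `λ ≥ 0`
we have `a(n, m) ≤ (m+1)^μ (n+1)^(ν-λ)` and `a(n, m) ≤ (m+1)^(μ-λ) (n+1)^ν`. Using the first bound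
for `m ≤ n` and the second for `m > n`, together with `∑_{m<n} (m+1)^μ = O(n^(μ+1))` for `μ > -1`
and `∑_{m≥k} (m+1)^(-s) = O(k^(1-s))` for `s > 1` (both by telescoping with the mean value
theorem), bounds row `n` by a constant times `(n+1)^(μ+ν+1-λ)`.

Conversely, row `0` is comparable to `∑ (m+1)^(μ-λ)`, which forces `λ > μ + 1`; and the `n + 1`
terms with `n ≤ m ≤ 2n` are all comparable to `(n+1)^(μ+ν-λ)`, so row `n` is at least a constant
times `(n+1)^(μ+ν+1-λ)`, which forces `λ ≥ μ + ν + 1`.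
-/

open Real Finset Filter Set

lemma exists_rpow_add_one_sub_rpow {x r : ℝ} (hx : 0 ≤ x) (h : x ≠ 0 ∨ 0 < r) :
    ∃ c ∈ Ioo x (x + 1), (x + 1) ^ r - x ^ r = r * c ^ (r - 1) := by
  obtain ⟨c, hc, hslope⟩ := exists_hasDerivAt_eq_slope (fun t : ℝ ↦ t ^ r)
    (fun t ↦ r * t ^ (r - 1)) (lt_add_one x)
    (fun t ht ↦ (continuousAt_rpow_const t r <| by
      rcases h with h | h
      · exact .inl (by linarith [ht.1, lt_of_le_of_ne hx (Ne.symm h)])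
      · exact .inr h.le).continuousWithinAt)
    (fun t ht ↦ hasDerivAt_rpow_const (.inl (by linarith [ht.1])))
  exact ⟨c, hc, by rw [hslope, add_sub_cancel_left, div_one]⟩

lemma mul_rpow_sub_one_le_rpow_add_one_sub_rpow {x p : ℝ} (hx : 0 ≤ x) (hp₀ : 0 < p)
    (hp₁ : p ≤ 1) : p * (x + 1) ^ (p - 1) ≤ (x + 1) ^ p - x ^ p := by
  obtain ⟨c, hc, hmvt⟩ := exists_rpow_add_one_sub_rpow hx (.inr hp₀)
  rw [hmvt]
  exact mul_le_mul_of_nonneg_left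
    (rpow_le_rpow_of_nonpos (by linarith [hc.1]) hc.2.le (by linarith)) hp₀.le

lemma mul_rpow_neg_sub_one_le_rpow_neg_sub_rpow_neg {x q : ℝ} (hx : 0 < x) (hq : 0 < q) :
    q * (x + 1) ^ (-q - 1) ≤ x ^ (-q) - (x + 1) ^ (-q) := by
  obtain ⟨c, hc, hmvt⟩ := exists_rpow_add_one_sub_rpow (r := -q) hx.le (.inl hx.ne')
  have := mul_le_mul_of_nonneg_left
    (rpow_le_rpow_of_nonpos (by linarith [hc.1]) hc.2.le (by linarith : -q - 1 ≤ 0)) hq.le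
  linarith

lemma sum_range_rpow_le {r : ℝ} (hr : -1 < r) (n : ℕ) :
    ∑ m ∈ range n, ((m : ℝ) + 1) ^ r ≤ max 1 (r + 1)⁻¹ * (n : ℝ) ^ (r + 1) := by
  rcases le_or_gt 0 r with hr₀ | hr₀
  · calc ∑ m ∈ range n, ((m : ℝ) + 1) ^ r ≤ ∑ _m ∈ range n, (n : ℝ) ^ r := by
          gcongr with m hm
          exact_mod_cast mem_range.mp hm
      _ = (n : ℝ) ^ (r + 1) := by
          rw [sum_const, card_range, nsmul_eq_mul, rpow_add_one' n.cast_nonneg (by linarith),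
            mul_comm]
      _ ≤ max 1 (r + 1)⁻¹ * (n : ℝ) ^ (r + 1) :=
          le_mul_of_one_le_left (by positivity) (le_max_left _ _)
  · have hp : 0 < r + 1 := by linarith
    calc ∑ m ∈ range n, ((m : ℝ) + 1) ^ r
        ≤ ∑ m ∈ range n, (r + 1)⁻¹ * (((m + 1 : ℕ) : ℝ) ^ (r + 1) - (m : ℝ) ^ (r + 1)) := by
          gcongr with m
          rw [le_inv_mul_iff₀ hp, Nat.cast_succ]
          simpa using mul_rpow_sub_one_le_rpow_add_one_sub_rpow m.cast_nonneg hp (by linarith)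
      _ = (r + 1)⁻¹ * (n : ℝ) ^ (r + 1) := by
          rw [← mul_sum, sum_range_sub (fun m : ℕ ↦ (m : ℝ) ^ (r + 1)), Nat.cast_zero,
            zero_rpow hp.ne', sub_zero]
      _ ≤ max 1 (r + 1)⁻¹ * (n : ℝ) ^ (r + 1) := by gcongr; exact le_max_right _ _

lemma sum_Ico_rpow_neg_le {s : ℝ} (hs : 1 < s) {k : ℕ} (hk : 0 < k) (N : ℕ) :
    ∑ m ∈ Ico k N, ((m : ℝ) + 1) ^ (-s) ≤ (k : ℝ) ^ (1 - s) / (s - 1) := by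
  have hq : 0 < s - 1 := by linarith
  rcases le_or_gt k N with hkN | hNk
  · calc ∑ m ∈ Ico k N, ((m : ℝ) + 1) ^ (-s)
        ≤ ∑ m ∈ Ico k N, (s - 1)⁻¹ * ((m : ℝ) ^ (1 - s) - ((m + 1 : ℕ) : ℝ) ^ (1 - s)) := by
          gcongr with m hm
          have hm : (0 : ℝ) < m := by exact_mod_cast hk.trans_le (mem_Ico.mp hm).1
          rw [le_inv_mul_iff₀ hq, Nat.cast_succ]
          simpa using mul_rpow_neg_sub_one_le_rpow_neg_sub_rpow_neg hm hq
      _ = ((k : ℝ) ^ (1 - s) - (N : ℝ) ^ (1 - s)) / (s - 1) := by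
          rw [← mul_sum, div_eq_inv_mul, ← neg_sub ((N : ℝ) ^ (1 - s)),
            ← sum_Ico_sub (fun m : ℕ ↦ (m : ℝ) ^ (1 - s)) hkN, ← sum_neg_distrib]
          simp only [neg_sub]
      _ ≤ (k : ℝ) ^ (1 - s) / (s - 1) := by gcongr; exact sub_le_self _ (by positivity)
  · rw [Finset.Ico_eq_empty_of_le hNk.le, sum_empty]
    positivity

lemma rpow_le_rpow_mul_of_le_mul {x y K : ℝ} (r : ℝ) (hx : 0 < x) (hy : 0 < y)
    (hxy : x ≤ K * y) (hyx : y ≤ K * x) : x ^ r ≤ K ^ |r| * y ^ r := by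
  have hK : 0 < K := by by_contra! hK; nlinarith
  have hlog : |log x - log y| ≤ log K := by
    rw [abs_sub_le_iff]
    constructor
    · linarith [log_le_log hx hxy, log_mul hK.ne' hy.ne']
    · linarith [log_le_log hy hyx, log_mul hK.ne' hx.ne']
  rw [rpow_def_of_pos hx, rpow_def_of_pos hK, rpow_def_of_pos hy, ← exp_add, exp_le_exp]
  have : (log x - log y) * r ≤ log K * |r| :=
    calc (log x - log y) * r ≤ |log x - log y| * |r| := by rw [← abs_mul]; exact le_abs_self _
      _ ≤ log K * |r| := by gcongr
  linarith

lemma nonpos_of_forall_rpow_natCast_add_one_le {e C : ℝ} (h : ∀ n : ℕ, ((n : ℝ) + 1) ^ e ≤ C) :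
    e ≤ 0 := by
  by_contra! he
  have hlim : Tendsto (fun n : ℕ ↦ ((n : ℝ) + 1) ^ e) atTop atTop :=
    (tendsto_rpow_atTop he).comp (tendsto_atTop_add_const_right _ 1 tendsto_natCast_atTop_atTop)
  obtain ⟨n, hn⟩ := (hlim.eventually_gt_atTop C).exists
  exact (h n).not_gt hn

lemma iSup_tsum_ofReal_ne_top_iff {f : ℕ → ℕ → ℝ} (hf : ∀ n m, 0 ≤ f n m) :
    (⨆ n, ∑' m, ENNReal.ofReal (f n m)) ≠ ⊤ ↔ ∃ C, ∀ n N, ∑ m ∈ range N, f n m ≤ C := by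
  constructor
  · intro h
    refine ⟨(⨆ n, ∑' m, ENNReal.ofReal (f n m)).toReal, fun n N ↦ ?_⟩
    rw [← ENNReal.ofReal_le_iff_le_toReal h, ENNReal.ofReal_sum_of_nonneg fun m _ ↦ hf n m]
    exact (ENNReal.sum_le_tsum _).trans (le_iSup (fun n ↦ ∑' m, ENNReal.ofReal (f n m)) n)
  · rintro ⟨C, hC⟩
    refine ne_top_of_le_ne_top (ENNReal.ofReal_ne_top (r := C)) (iSup_le fun n ↦ ?_)
    refine ENNReal.tsum_le_of_sum_range_le fun N ↦ ?_
    rw [← ENNReal.ofReal_sum_of_nonneg fun m _ ↦ hf n m]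
    exact ENNReal.ofReal_le_ofReal (hC n N)

noncomputable def hilbertTerm (lam mu nu : ℝ) (n m : ℕ) : ℝ :=
  ((m : ℝ) + 1) ^ mu * ((n : ℝ) + 1) ^ nu / (((m : ℝ) + 1) + ((n : ℝ) + 1)) ^ lam

section hilbertTerm

variable {lam mu nu : ℝ}

lemma hilbertTerm_nonneg (lam mu nu : ℝ) (n m : ℕ) : 0 ≤ hilbertTerm lam mu nu n m := by
  unfold hilbertTerm; positivity

lemma hilbertTerm_le_left (hlam : 0 ≤ lam) (n m : ℕ) :
    hilbertTerm lam mu nu n m ≤ ((m : ℝ) + 1) ^ mu * ((n : ℝ) + 1) ^ (nu - lam) := by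
  rw [hilbertTerm, rpow_sub (by positivity), ← mul_div_assoc]
  gcongr _ / ?_ ^ _
  exact le_add_of_nonneg_left (by positivity : (0 : ℝ) ≤ (m : ℝ) + 1)

lemma hilbertTerm_le_right (hlam : 0 ≤ lam) (n m : ℕ) :
    hilbertTerm lam mu nu n m ≤ ((m : ℝ) + 1) ^ (mu - lam) * ((n : ℝ) + 1) ^ nu := by
  rw [hilbertTerm, rpow_sub (by positivity), div_mul_eq_mul_div]
  gcongr _ / ?_ ^ _
  exact le_add_of_nonneg_right (by positivity : (0 : ℝ) ≤ (n : ℝ) + 1)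

lemma sum_range_succ_hilbertTerm_le (hlam : 0 ≤ lam) (hmu : -1 < mu) (h1 : mu + nu + 1 ≤ lam)
    (n : ℕ) :
    ∑ m ∈ range (n + 1), hilbertTerm lam mu nu n m ≤ max 1 (mu + 1)⁻¹ := by
  have hn : (0 : ℝ) < n + 1 := by positivity
  calc ∑ m ∈ range (n + 1), hilbertTerm lam mu nu n m
      ≤ (∑ m ∈ range (n + 1), ((m : ℝ) + 1) ^ mu) * ((n : ℝ) + 1) ^ (nu - lam) := by
        rw [sum_mul]
        exact sum_le_sum fun m _ ↦ hilbertTerm_le_left hlam n m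
    _ ≤ max 1 (mu + 1)⁻¹ * ((n : ℝ) + 1) ^ (mu + 1) * ((n : ℝ) + 1) ^ (nu - lam) := by
        gcongr
        exact_mod_cast sum_range_rpow_le hmu (n + 1)
    _ = max 1 (mu + 1)⁻¹ * ((n : ℝ) + 1) ^ (mu + nu + 1 - lam) := by
        rw [mul_assoc, ← rpow_add hn]; ring_nf
    _ ≤ max 1 (mu + 1)⁻¹ := by
        refine mul_le_of_le_one_right (by positivity) (rpow_le_one_of_one_le_of_nonpos ?_ ?_)
        · linarith [(n.cast_nonneg : (0 : ℝ) ≤ n)]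
        · linarith

lemma sum_Ico_succ_hilbertTerm_le (hlam : 0 ≤ lam) (h1 : mu + nu + 1 ≤ lam) (h2 : mu + 1 < lam)
    (n N : ℕ) :
    ∑ m ∈ Ico (n + 1) N, hilbertTerm lam mu nu n m ≤ (lam - mu - 1)⁻¹ := by
  have hn : (0 : ℝ) < n + 1 := by positivity
  calc ∑ m ∈ Ico (n + 1) N, hilbertTerm lam mu nu n m
      ≤ (∑ m ∈ Ico (n + 1) N, ((m : ℝ) + 1) ^ (-(lam - mu))) * ((n : ℝ) + 1) ^ nu := by
        rw [sum_mul]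
        exact sum_le_sum fun m _ ↦ by
          simpa using hilbertTerm_le_right hlam n m
    _ ≤ ((n : ℝ) + 1) ^ (1 - (lam - mu)) / (lam - mu - 1) * ((n : ℝ) + 1) ^ nu := by
        gcongr
        exact_mod_cast sum_Ico_rpow_neg_le (by linarith) n.succ_pos N
    _ = ((n : ℝ) + 1) ^ (mu + nu + 1 - lam) * (lam - mu - 1)⁻¹ := by
        rw [div_mul_eq_mul_div, ← rpow_add hn, div_eq_mul_inv]; ring_nf
    _ ≤ (lam - mu - 1)⁻¹ := by
        refine mul_le_of_le_one_left (inv_nonneg.mpr (by linarith))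
          (rpow_le_one_of_one_le_of_nonpos ?_ ?_)
        · linarith [(n.cast_nonneg : (0 : ℝ) ≤ n)]
        · linarith

lemma sum_range_hilbertTerm_le (hmu : -1 < mu) (h1 : mu + nu + 1 ≤ lam) (h2 : mu + 1 < lam)
    (n N : ℕ) :
    ∑ m ∈ range N, hilbertTerm lam mu nu n m ≤ max 1 (mu + 1)⁻¹ + (lam - mu - 1)⁻¹ := by
  have hlam : 0 ≤ lam := by linarith
  calc ∑ m ∈ range N, hilbertTerm lam mu nu n m
      ≤ ∑ m ∈ range (max N (n + 1)), hilbertTerm lam mu nu n m :=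
        sum_le_sum_of_subset_of_nonneg (range_subset_range.mpr (le_max_left _ _))
          fun m _ _ ↦ hilbertTerm_nonneg lam mu nu n m
    _ = ∑ m ∈ range (n + 1), hilbertTerm lam mu nu n m +
          ∑ m ∈ Ico (n + 1) (max N (n + 1)), hilbertTerm lam mu nu n m :=
        (sum_range_add_sum_Ico _ (le_max_right _ _)).symm
    _ ≤ max 1 (mu + 1)⁻¹ + (lam - mu - 1)⁻¹ :=
        add_le_add (sum_range_succ_hilbertTerm_le hlam hmu h1 n)
          (sum_Ico_succ_hilbertTerm_le hlam h1 h2 n _)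

lemma lt_of_summable_hilbertTerm_zero (h : Summable (hilbertTerm lam mu nu 0)) :
    mu + 1 < lam := by
  have hlower : ∀ m : ℕ,
      (2 ^ |lam|)⁻¹ * ((m : ℝ) + 1) ^ (mu - lam) ≤ hilbertTerm lam mu nu 0 m := by
    intro m
    have hm : (0 : ℝ) < m + 1 := by positivity
    have hcmp : ((m : ℝ) + 1 + 1) ^ lam ≤ 2 ^ |lam| * ((m : ℝ) + 1) ^ lam :=
      rpow_le_rpow_mul_of_le_mul lam (by positivity) hm (by linarith) (by linarith)
    rw [hilbertTerm, Nat.cast_zero, zero_add, one_rpow, mul_one, rpow_sub hm,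
      le_div_iff₀ (by positivity)]
    calc (2 ^ |lam|)⁻¹ * (((m : ℝ) + 1) ^ mu / ((m : ℝ) + 1) ^ lam) * ((m : ℝ) + 1 + 1) ^ lam
        ≤ (2 ^ |lam|)⁻¹ * (((m : ℝ) + 1) ^ mu / ((m : ℝ) + 1) ^ lam) *
            (2 ^ |lam| * ((m : ℝ) + 1) ^ lam) := by gcongr
      _ = ((m : ℝ) + 1) ^ mu := by field_simp
  have hsum : Summable fun m : ℕ ↦ (((m + 1 : ℕ) : ℝ)) ^ (mu - lam) := by
    push_cast
    exact (summable_mul_left_iff (by positivity)).mp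
      (Summable.of_nonneg_of_le (fun m ↦ by positivity) hlower h)
  linarith [summable_nat_rpow.mp ((summable_nat_add_iff 1).mp hsum)]

lemma rpow_le_mul_hilbertTerm {n m : ℕ} (hnm : n ≤ m) (hmn : m ≤ 2 * n) :
    ((n : ℝ) + 1) ^ (mu + nu - lam) ≤ 3 ^ (|mu| + |lam|) * hilbertTerm lam mu nu n m := by
  set a : ℝ := (n : ℝ) + 1
  set b : ℝ := (m : ℝ) + 1
  have ha : 0 < a := by positivity
  have hab : a ≤ b := by simp only [a, b]; gcongr
  have hba : b ≤ 2 * a := by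
    have : (m : ℝ) ≤ 2 * n := by exact_mod_cast hmn
    simp only [a, b]; linarith
  have hnum : a ^ mu ≤ 3 ^ |mu| * b ^ mu :=
    rpow_le_rpow_mul_of_le_mul mu ha (by linarith) (by linarith) (by linarith)
  have hden : (b + a) ^ lam ≤ 3 ^ |lam| * a ^ lam :=
    rpow_le_rpow_mul_of_le_mul lam (by linarith) ha (by linarith) (by linarith)
  calc a ^ (mu + nu - lam) = a ^ mu * a ^ nu / a ^ lam := by rw [rpow_sub ha, rpow_add ha]
    _ ≤ 3 ^ |mu| * b ^ mu * a ^ nu / a ^ lam := by gcongr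
    _ = 3 ^ |mu| * 3 ^ |lam| * (b ^ mu * a ^ nu) / (3 ^ |lam| * a ^ lam) := by
        field_simp
    _ ≤ 3 ^ |mu| * 3 ^ |lam| * (b ^ mu * a ^ nu) / (b + a) ^ lam := by gcongr
    _ = 3 ^ (|mu| + |lam|) * hilbertTerm lam mu nu n m := by
        rw [hilbertTerm, rpow_add (by norm_num), mul_div_assoc]

lemma rpow_le_mul_sum_range_hilbertTerm (n : ℕ) :
    ((n : ℝ) + 1) ^ (mu + nu + 1 - lam) ≤
      3 ^ (|mu| + |lam|) * ∑ m ∈ range (2 * n + 1), hilbertTerm lam mu nu n m := by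
  have hn : (0 : ℝ) < n + 1 := by positivity
  calc ((n : ℝ) + 1) ^ (mu + nu + 1 - lam)
      = ∑ _m ∈ Ico n (2 * n + 1), ((n : ℝ) + 1) ^ (mu + nu - lam) := by
        rw [sum_const, Nat.card_Ico, nsmul_eq_mul, show 2 * n + 1 - n = n + 1 by omega,
          show mu + nu + 1 - lam = mu + nu - lam + 1 by ring, rpow_add_one hn.ne']
        push_cast; ring
    _ ≤ ∑ m ∈ Ico n (2 * n + 1), 3 ^ (|mu| + |lam|) * hilbertTerm lam mu nu n m := by
        gcongr with m hm
        obtain ⟨hnm, hmn⟩ := mem_Ico.mp hm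
        exact rpow_le_mul_hilbertTerm hnm (by omega)
    _ ≤ 3 ^ (|mu| + |lam|) * ∑ m ∈ range (2 * n + 1), hilbertTerm lam mu nu n m := by
        rw [← mul_sum]
        exact mul_le_mul_of_nonneg_left (sum_le_sum_of_subset_of_nonneg
          (fun m hm ↦ mem_range.mpr (mem_Ico.mp hm).2)
          fun m _ _ ↦ hilbertTerm_nonneg lam mu nu n m) (by positivity)

end hilbertTerm

theorem stmt_7 (lam mu nu : ℝ) (hmu : -1 < mu) :
    (⨆ n : ℕ, ∑' m : ℕ,
        ENNReal.ofReal
          (((m : ℝ) + 1) ^ mu * ((n : ℝ) + 1) ^ nu /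
            (((m : ℝ) + 1) + ((n : ℝ) + 1)) ^ lam)) ≠ ⊤ ↔
      (mu + nu + 1 ≤ lam ∧ mu + 1 < lam) := by
  change (⨆ n : ℕ, ∑' m : ℕ, ENNReal.ofReal (hilbertTerm lam mu nu n m)) ≠ ⊤ ↔ _
  rw [iSup_tsum_ofReal_ne_top_iff (hilbertTerm_nonneg lam mu nu)]
  constructor
  · rintro ⟨C, hC⟩
    have h2 : mu + 1 < lam := lt_of_summable_hilbertTerm_zero
      (summable_of_sum_range_le (hilbertTerm_nonneg lam mu nu 0) (hC 0))
    have h1 : mu + nu + 1 - lam ≤ 0 :=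
      nonpos_of_forall_rpow_natCast_add_one_le (C := 3 ^ (|mu| + |lam|) * C) fun n ↦
        (rpow_le_mul_sum_range_hilbertTerm n).trans
          (mul_le_mul_of_nonneg_left (hC n _) (by positivity))
    exact ⟨by linarith, h2⟩
  · rintro ⟨h1, h2⟩
    exact ⟨_, sum_range_hilbertTerm_le hmu h1 h2⟩
end

section
/- Let 1 ≤ p ≤ q < ∞ and let λ, μ, ν, α, β be real numbers. Suppose the operator H_{λ,μ,ν}(a)(n) = Σ_{m=1}^∞ m^μ n^ν (m+n)^{-λ} a_m is bounded from ℓ^p_α to ℓ^q_β. Then β + 1 < q(λ - ν). -/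
/-!
Test the operator on the unit sequence `e₁`: its `ℓ^p_α` norm is `1`, while
`(H e₁)(n) = n^ν (n+1)^{-λ}` is comparable to `n^{ν-λ}`. Boundedness therefore makes
`∑ n^{β + q(ν-λ)}` finite, which by the `p`-series test means `β + q(ν-λ) < -1`.
-/

open scoped ENNReal

/-- Weighted `ℓ^p_θ` (quasi-)norm of a real sequence indexed by `m ≥ 1`
(here `m = i + 1` for `i : ℕ`), valued in `ℝ≥0∞`. -/
noncomputable def wnorm (p th : ℝ) (a : ℕ → ℝ) : ℝ≥0∞ :=
  (∑' m : ℕ, ENNReal.ofReal (((m : ℝ) + 1) ^ th * |a m| ^ p)) ^ (1 / p)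

/-- The discrete Hilbert-type operator `H_{λ,μ,ν}`, applied to `|a|`, valued
in `ℝ≥0∞` (the kernel is nonnegative). -/
noncomputable def Hop (lam mu nu : ℝ) (a : ℕ → ℝ) (n : ℕ) : ℝ≥0∞ :=
  ∑' m : ℕ, ENNReal.ofReal
    (((m : ℝ) + 1) ^ mu * ((n : ℝ) + 1) ^ nu /
      (((m : ℝ) + 1) + ((n : ℝ) + 1)) ^ lam * |a m|)

/-- Weighted `ℓ^q_β` norm of `H_{λ,μ,ν} a`. -/
noncomputable def outNorm (q be lam mu nu : ℝ) (a : ℕ → ℝ) : ℝ≥0∞ :=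
  (∑' n : ℕ, ENNReal.ofReal (((n : ℝ) + 1) ^ be) * (Hop lam mu nu a n) ^ q) ^ (1 / q)

/-- `H_{λ,μ,ν}` is bounded from `ℓ^p_α` to `ℓ^q_β`. -/
def BddOp (p q al be lam mu nu : ℝ) : Prop :=
  ∃ C : ℝ≥0∞, C ≠ ⊤ ∧ ∀ a : ℕ → ℝ, outNorm q be lam mu nu a ≤ C * wnorm p al a

theorem wnorm_single_zero (p al : ℝ) : wnorm p al (Pi.single 0 1) = 1 := by
  rcases eq_or_ne p 0 with rfl | hp
  · simp [wnorm] -- `1 / 0 = 0`, so the outer power is `^ 0`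
  rw [wnorm, tsum_eq_single 0 fun m hm => by simp [hm, Real.zero_rpow hp]]
  simp

theorem Hop_single_zero (lam mu nu : ℝ) (n : ℕ) :
    Hop lam mu nu (Pi.single 0 1) n =
      ENNReal.ofReal (((n : ℝ) + 1) ^ nu / ((n : ℝ) + 2) ^ lam) := by
  rw [Hop, tsum_eq_single 0 fun m hm => by simp [hm]]
  norm_num
  ring_nf

theorem summable_nat_add_one_rpow_iff {r : ℝ} :
    Summable (fun n : ℕ => ((n : ℝ) + 1) ^ r) ↔ r < -1 := by
  rw [← Real.summable_nat_rpow, ← summable_nat_add_iff 1 (f := fun n : ℕ => (n : ℝ) ^ r)]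
  push_cast
  rfl

theorem summable_of_tsum_ofReal_ne_top {ι : Type*} {f : ι → ℝ} (hf : ∀ i, 0 ≤ f i)
    (h : ∑' i, ENNReal.ofReal (f i) ≠ ⊤) : Summable f :=
  (ENNReal.summable_toReal h).congr fun i => ENNReal.toReal_ofReal (hf i)

theorem min_one_two_rpow_mul_rpow_le {x y : ℝ} (s : ℝ) (hx : 0 < x) (hxy : x ≤ y)
    (hy : y ≤ 2 * x) :
    min 1 (2 ^ s) * x ^ s ≤ y ^ s := by
  rcases le_total 0 s with hs | hs
  · calc min 1 (2 ^ s) * x ^ s ≤ 1 * x ^ s := by gcongr; exact min_le_left _ _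
      _ ≤ y ^ s := by rw [one_mul]; exact Real.rpow_le_rpow hx.le hxy hs
  · calc min 1 (2 ^ s) * x ^ s ≤ 2 ^ s * x ^ s := by gcongr; exact min_le_right _ _
      _ = (2 * x) ^ s := (Real.mul_rpow zero_le_two hx.le).symm
      _ ≤ y ^ s := Real.rpow_le_rpow_of_nonpos (by linarith) hy hs

theorem lt_neg_one_of_tsum_ne_top {q be lam nu : ℝ} (hq : 0 < q)
    (h : ∑' n : ℕ, ENNReal.ofReal (((n : ℝ) + 1) ^ be) *
      ENNReal.ofReal (((n : ℝ) + 1) ^ nu / ((n : ℝ) + 2) ^ lam) ^ q ≠ ⊤) :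
    be + q * (nu - lam) < -1 := by
  set c := min 1 ((2 : ℝ) ^ (-(q * lam)))
  have hc : 0 < c := lt_min one_pos (by positivity)
  have hterm : ∀ n : ℕ, ENNReal.ofReal (c * ((n : ℝ) + 1) ^ (be + q * (nu - lam))) ≤
      ENNReal.ofReal (((n : ℝ) + 1) ^ be) *
        ENNReal.ofReal (((n : ℝ) + 1) ^ nu / ((n : ℝ) + 2) ^ lam) ^ q := by
    intro n
    have hx : (0 : ℝ) < n + 1 := by positivity
    rw [ENNReal.ofReal_rpow_of_nonneg (by positivity) hq.le, ← ENNReal.ofReal_mul (by positivity)]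
    refine ENNReal.ofReal_le_ofReal ?_
    have hshift := min_one_two_rpow_mul_rpow_le (y := (n : ℝ) + 1 + 1) (-(q * lam)) hx
      (by linarith) (by linarith)
    calc c * ((n : ℝ) + 1) ^ (be + q * (nu - lam))
        = ((n : ℝ) + 1) ^ be * ((n : ℝ) + 1) ^ (nu * q) *
            (c * ((n : ℝ) + 1) ^ (-(q * lam))) := by
          rw [Real.rpow_add hx, mul_sub, Real.rpow_sub hx, Real.rpow_neg hx.le]; ring_nf
      _ ≤ ((n : ℝ) + 1) ^ be * ((n : ℝ) + 1) ^ (nu * q) * ((n : ℝ) + 1 + 1) ^ (-(q * lam)) := by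
          gcongr
      _ = ((n : ℝ) + 1) ^ be * (((n : ℝ) + 1) ^ nu / ((n : ℝ) + 2) ^ lam) ^ q := by
          rw [Real.div_rpow (by positivity) (by positivity), ← Real.rpow_mul hx.le,
            ← Real.rpow_mul (by positivity), Real.rpow_neg (by positivity)]
          ring_nf
  have hsum := summable_of_tsum_ofReal_ne_top (fun n => by positivity)
    (ne_top_of_le_ne_top h (ENNReal.tsum_le_tsum hterm))
  exact summable_nat_add_one_rpow_iff.1 ((hsum.mul_left c⁻¹).congr fun n => by field_simp)

theorem stmt_8 (p q al be lam mu nu : ℝ) (hp : 1 ≤ p) (hpq : p ≤ q)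
    (h : BddOp p q al be lam mu nu) : be + 1 < q * (lam - nu) := by
  have hq : 0 < q := by linarith
  obtain ⟨C, hC, hbound⟩ := h
  have hout : outNorm q be lam mu nu (Pi.single 0 1) ≠ ⊤ := by
    refine ne_top_of_le_ne_top hC ?_
    simpa [wnorm_single_zero] using hbound (Pi.single 0 1)
  rw [outNorm, Ne, ENNReal.rpow_eq_top_iff_of_pos (one_div_pos.2 hq)] at hout
  simp only [Hop_single_zero] at hout
  linarith [lt_neg_one_of_tsum_ne_top hq hout]
end

section
/- Let λ, μ, ν, α be real numbers. Then the operator H_{λ,μ,ν}(a)(n) = Σ_{m=1}^∞ m^μ n^ν (m+n)^{-λ} a_m is bounded from ℓ^1_α to ℓ^∞ if and only if λ ≥ μ + ν − α, λ ≥ ν, and λ ≥ μ − α. -/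
open scoped ENNReal

/-- Sum bound: `(x+y)^lam ≤ 2^|lam| * x^lam` when `y ≤ x`. -/
lemma hb_lem (lam : ℝ) {x y : ℝ} (hx : 1 ≤ x) (hy : 0 < y) (hyx : y ≤ x) :
    (x + y) ^ lam ≤ 2 ^ |lam| * x ^ lam := by
  have hx0 : (0:ℝ) < x := lt_of_lt_of_le one_pos hx
  rcases le_or_gt 0 lam with h | h
  · rw [abs_of_nonneg h]
    calc (x + y) ^ lam ≤ (2 * x) ^ lam :=
          Real.rpow_le_rpow (by positivity) (by linarith) h
      _ = 2 ^ lam * x ^ lam := Real.mul_rpow (by norm_num) (le_of_lt hx0)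
  · rw [abs_of_neg h]
    have h1 : (x + y) ^ lam ≤ x ^ lam :=
      Real.rpow_le_rpow_of_nonpos hx0 (by linarith) (le_of_lt h)
    have h2 : (1:ℝ) ≤ 2 ^ (-lam) := Real.one_le_rpow (by norm_num) (by linarith)
    nlinarith [Real.rpow_pos_of_pos hx0 lam]

/-- Max bound: `(max x y)^lam ≤ 2^|lam| * (x+y)^lam`. -/
lemma hb'_lem (lam : ℝ) {x y : ℝ} (hx : 1 ≤ x) (hy : 1 ≤ y) :
    (max x y) ^ lam ≤ 2 ^ |lam| * (x + y) ^ lam := by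
  have hx0 : (0:ℝ) < x := lt_of_lt_of_le one_pos hx
  have hy0 : (0:ℝ) < y := lt_of_lt_of_le one_pos hy
  have hm0 : (0:ℝ) < max x y := lt_max_of_lt_left hx0
  have hsum : x + y ≤ 2 * max x y := by
    rcases max_cases x y with ⟨h1, h2⟩ | ⟨h1, h2⟩ <;> rw [h1] <;> linarith
  rcases le_or_gt 0 lam with h | h
  · rw [abs_of_nonneg h]
    have h1 : (max x y) ^ lam ≤ (x + y) ^ lam :=
      Real.rpow_le_rpow (le_of_lt hm0) (by rcases max_cases x y with ⟨h1, _⟩ | ⟨h1, _⟩ <;> rw [h1] <;> linarith) h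
    have h2 : (1:ℝ) ≤ 2 ^ lam := Real.one_le_rpow (by norm_num) h
    nlinarith [Real.rpow_pos_of_pos (show (0:ℝ) < x + y by linarith) lam]
  · rw [abs_of_neg h]
    have h1 : (2 * max x y) ^ lam ≤ (x + y) ^ lam :=
      Real.rpow_le_rpow_of_nonpos (by linarith) hsum (le_of_lt h)
    rw [Real.mul_rpow (by norm_num) (le_of_lt hm0)] at h1
    have h2 : (0:ℝ) < 2 ^ lam := Real.rpow_pos_of_pos two_pos lam
    have h3 : (2:ℝ) ^ (-lam) * 2 ^ lam = 1 := by
      rw [← Real.rpow_add two_pos]; norm_num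
    have h4 := mul_le_mul_of_nonneg_left h1
      (le_of_lt (Real.rpow_pos_of_pos two_pos (-lam)))
    calc (max x y) ^ lam = 2 ^ (-lam) * 2 ^ lam * (max x y) ^ lam := by rw [h3]; ring
      _ ≤ 2 ^ (-lam) * (x + y) ^ lam := by nlinarith

/-- Step A: `x^mu * y^nu ≤ x^al * (max x y)^lam` under the exponent conditions. -/
lemma stepA {al lam mu nu : ℝ} (h1 : mu + nu - al ≤ lam) (h2 : nu ≤ lam)
    (h3 : mu - al ≤ lam) {x y : ℝ} (hx : 1 ≤ x) (hy : 1 ≤ y) :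
    x ^ mu * y ^ nu ≤ x ^ al * (max x y) ^ lam := by
  have hx0 : (0:ℝ) < x := lt_of_lt_of_le one_pos hx
  have hy0 : (0:ℝ) < y := lt_of_lt_of_le one_pos hy
  rcases le_total x y with hxy | hxy
  · rw [max_eq_right hxy]
    rcases le_total al mu with hal | hal
    · have e1 : x ^ mu = x ^ al * x ^ (mu - al) := by
        rw [← Real.rpow_add hx0]; ring_nf
      have e2 : x ^ (mu - al) ≤ y ^ (mu - al) :=
        Real.rpow_le_rpow (le_of_lt hx0) hxy (by linarith)
      have e3 : y ^ (mu - al) * y ^ nu = y ^ (mu - al + nu) :=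
        (Real.rpow_add hy0 _ _).symm
      have e4 : y ^ (mu - al + nu) ≤ y ^ lam :=
        Real.rpow_le_rpow_of_exponent_le hy (by linarith)
      calc x ^ mu * y ^ nu = x ^ al * (x ^ (mu - al) * y ^ nu) := by rw [e1]; ring
        _ ≤ x ^ al * (y ^ (mu - al) * y ^ nu) := by
            have := mul_le_mul_of_nonneg_right e2 (le_of_lt (Real.rpow_pos_of_pos hy0 nu))
            nlinarith [Real.rpow_pos_of_pos hx0 al]
        _ = x ^ al * y ^ (mu - al + nu) := by rw [e3]
        _ ≤ x ^ al * y ^ lam := by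
            nlinarith [Real.rpow_pos_of_pos hx0 al]
    · have e1 : x ^ mu ≤ x ^ al := Real.rpow_le_rpow_of_exponent_le hx hal
      have e2 : y ^ nu ≤ y ^ lam := Real.rpow_le_rpow_of_exponent_le hy h2
      have := mul_le_mul e1 e2 (le_of_lt (Real.rpow_pos_of_pos hy0 nu))
        (le_of_lt (Real.rpow_pos_of_pos hx0 al))
      exact this
  · rw [max_eq_left hxy]
    rcases le_total 0 nu with hnu | hnu
    · have e1 : y ^ nu ≤ x ^ nu := Real.rpow_le_rpow (le_of_lt hy0) hxy hnu
      have e2 : x ^ mu * x ^ nu = x ^ (mu + nu) := (Real.rpow_add hx0 _ _).symm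
      have e3 : x ^ (mu + nu) ≤ x ^ (al + lam) :=
        Real.rpow_le_rpow_of_exponent_le hx (by linarith)
      calc x ^ mu * y ^ nu ≤ x ^ mu * x ^ nu := by
            nlinarith [Real.rpow_pos_of_pos hx0 mu]
        _ = x ^ (mu + nu) := e2
        _ ≤ x ^ (al + lam) := e3
        _ = x ^ al * x ^ lam := Real.rpow_add hx0 _ _
    · have e1 : y ^ nu ≤ 1 := Real.rpow_le_one_of_one_le_of_nonpos hy hnu
      have e2 : x ^ mu ≤ x ^ (al + lam) :=
        Real.rpow_le_rpow_of_exponent_le hx (by linarith)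
      calc x ^ mu * y ^ nu ≤ x ^ mu * 1 := by
            nlinarith [Real.rpow_pos_of_pos hx0 mu]
        _ = x ^ mu := mul_one _
        _ ≤ x ^ (al + lam) := e2
        _ = x ^ al * x ^ lam := Real.rpow_add hx0 _ _
      
/-- The key pointwise kernel bound. -/
lemma key_lem {al lam mu nu : ℝ} (h1 : mu + nu - al ≤ lam) (h2 : nu ≤ lam)
    (h3 : mu - al ≤ lam) {x y : ℝ} (hx : 1 ≤ x) (hy : 1 ≤ y) :
    x ^ mu * y ^ nu / (x + y) ^ lam ≤ 2 ^ |lam| * x ^ al := by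
  have hx0 : (0:ℝ) < x := lt_of_lt_of_le one_pos hx
  have hy0 : (0:ℝ) < y := lt_of_lt_of_le one_pos hy
  have hd : (0:ℝ) < (x + y) ^ lam := Real.rpow_pos_of_pos (by linarith) lam
  rw [div_le_iff₀ hd]
  calc x ^ mu * y ^ nu ≤ x ^ al * (max x y) ^ lam := stepA h1 h2 h3 hx hy
    _ ≤ x ^ al * (2 ^ |lam| * (x + y) ^ lam) := by
        have := hb'_lem lam hx hy
        nlinarith [Real.rpow_pos_of_pos hx0 al]
    _ = 2 ^ |lam| * x ^ al * (x + y) ^ lam := by ring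

/-- If `(n+1)^δ` is uniformly bounded, then `δ ≤ 0`. -/
lemma exp_nonpos {d M : ℝ} (h : ∀ n : ℕ, ((n : ℝ) + 1) ^ d ≤ M) : d ≤ 0 := by
  by_contra hd
  push_neg at hd
  have h1 : Filter.Tendsto (fun n : ℕ => ((n : ℝ) + 1) ^ d) Filter.atTop Filter.atTop :=
    (tendsto_rpow_atTop hd).comp
      (Filter.tendsto_atTop_add_const_right _ 1 tendsto_natCast_atTop_atTop)
  obtain ⟨n, hn⟩ := (h1.eventually_gt_atTop M).exists
  exact absurd (h n) (not_le.2 hn)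

/-- Derivation step: from a kernel upper bound get a power bound. -/
lemma step2 {lam x y b M : ℝ} (hx : 1 ≤ x) (hy : 0 < y) (hyx : y ≤ x)
    (h : x ^ b / (x + y) ^ lam ≤ M) : x ^ (b - lam) ≤ 2 ^ |lam| * M := by
  have hx0 : (0:ℝ) < x := lt_of_lt_of_le one_pos hx
  have h2 : (0:ℝ) < 2 ^ |lam| := Real.rpow_pos_of_pos two_pos _
  have hxl : (0:ℝ) < x ^ lam := Real.rpow_pos_of_pos hx0 lam
  have hxb : (0:ℝ) < x ^ b := Real.rpow_pos_of_pos hx0 b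
  have hbd : (x + y) ^ lam ≤ 2 ^ |lam| * x ^ lam := hb_lem lam hx hy hyx
  have h3 : x ^ b / (2 ^ |lam| * x ^ lam) ≤ x ^ b / (x + y) ^ lam :=
    div_le_div_of_nonneg_left (le_of_lt hxb) (Real.rpow_pos_of_pos (by linarith) lam) hbd
  have h4 : x ^ b / (2 ^ |lam| * x ^ lam) ≤ M := le_trans h3 h
  rw [Real.rpow_sub hx0, div_le_iff₀ hxl]
  rw [div_le_iff₀ (by positivity : (0:ℝ) < 2 ^ |lam| * x ^ lam)] at h4
  calc x ^ b ≤ M * (2 ^ |lam| * x ^ lam) := h4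
    _ = 2 ^ |lam| * M * x ^ lam := by ring

lemma shift {x b al T D : ℝ} (hx : 0 < x) (h : x ^ b / D ≤ T * x ^ al) :
    x ^ (b - al) / D ≤ T := by
  rw [Real.rpow_sub hx, div_right_comm, div_le_iff₀ (Real.rpow_pos_of_pos hx al)]
  exact h

theorem stmt_12 (al lam mu nu : ℝ) :
    (∃ C : ℝ≥0∞, C ≠ ⊤ ∧ ∀ a : ℕ → ℝ,
        (⨆ n : ℕ, Hop lam mu nu a n) ≤ C * wnorm 1 al a) ↔
      (mu + nu - al ≤ lam ∧ nu ≤ lam ∧ mu - al ≤ lam) := by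
  constructor
  · rintro ⟨C, hC, hbd⟩
    have hT0 : 0 ≤ C.toReal := ENNReal.toReal_nonneg
    have hK : ∀ m n : ℕ,
        ((m:ℝ)+1) ^ mu * ((n:ℝ)+1) ^ nu / (((m:ℝ)+1) + ((n:ℝ)+1)) ^ lam ≤
          C.toReal * ((m:ℝ)+1) ^ al := by
      intro m n
      set a : ℕ → ℝ := fun k => if k = m then 1 else 0 with ha
      have hw : wnorm 1 al a = ENNReal.ofReal (((m:ℝ)+1) ^ al) := by
        unfold wnorm
        rw [show (1:ℝ)/1 = 1 by norm_num, ENNReal.rpow_one,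
          tsum_eq_single m (by intro k hk; simp [ha, hk, Real.rpow_one])]
        simp [ha, Real.rpow_one]
      have hHop : ENNReal.ofReal
          (((m:ℝ)+1) ^ mu * ((n:ℝ)+1) ^ nu / (((m:ℝ)+1) + ((n:ℝ)+1)) ^ lam) ≤
          Hop lam mu nu a n := by
        have h := ENNReal.le_tsum (f := fun k : ℕ => ENNReal.ofReal
          (((k:ℝ)+1) ^ mu * ((n:ℝ)+1) ^ nu / (((k:ℝ)+1) + ((n:ℝ)+1)) ^ lam * |a k|)) m
        unfold Hop
        simpa [ha] using h
      have h1 : ENNReal.ofReal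
          (((m:ℝ)+1) ^ mu * ((n:ℝ)+1) ^ nu / (((m:ℝ)+1) + ((n:ℝ)+1)) ^ lam) ≤
          C * ENNReal.ofReal (((m:ℝ)+1) ^ al) := by
        calc _ ≤ Hop lam mu nu a n := hHop
          _ ≤ ⨆ k : ℕ, Hop lam mu nu a k := le_iSup _ n
          _ ≤ C * wnorm 1 al a := hbd a
          _ = C * ENNReal.ofReal (((m:ℝ)+1) ^ al) := by rw [hw]
      have hfin : C * ENNReal.ofReal (((m:ℝ)+1) ^ al) ≠ ⊤ :=
        ENNReal.mul_ne_top hC ENNReal.ofReal_ne_top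
      have h2 := (ENNReal.ofReal_le_iff_le_toReal hfin).1 h1
      rwa [ENNReal.toReal_mul, ENNReal.toReal_ofReal
        (le_of_lt (Real.rpow_pos_of_pos (by positivity) al))] at h2
    refine ⟨?_, ?_, ?_⟩
    · have hb : ∀ m : ℕ, ((m:ℝ)+1) ^ (mu + nu - al - lam) ≤ 2 ^ |lam| * C.toReal := by
        intro m
        have hx : (1:ℝ) ≤ (m:ℝ)+1 := le_add_of_nonneg_left (Nat.cast_nonneg m)
        have hx0 : (0:ℝ) < (m:ℝ)+1 := by positivity
        have h := hK m m
        rw [← Real.rpow_add hx0 mu nu] at h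
        exact step2 hx hx0 le_rfl (shift hx0 h)
      have := exp_nonpos hb; linarith
    · have hb : ∀ n : ℕ, ((n:ℝ)+1) ^ (nu - lam) ≤ 2 ^ |lam| * C.toReal := by
        intro n
        have hx : (1:ℝ) ≤ (n:ℝ)+1 := le_add_of_nonneg_left (Nat.cast_nonneg n)
        have h := hK 0 n
        have h' : ((n:ℝ)+1) ^ nu / (((n:ℝ)+1) + 1) ^ lam ≤ C.toReal := by
          rw [show (((0:ℕ):ℝ)+1) = (1:ℝ) by norm_num] at h
          rw [Real.one_rpow, Real.one_rpow, one_mul, mul_one, add_comm (1:ℝ)] at h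
          exact h
        exact step2 hx one_pos hx h'
      have := exp_nonpos hb; linarith
    · have hb : ∀ m : ℕ, ((m:ℝ)+1) ^ (mu - al - lam) ≤ 2 ^ |lam| * C.toReal := by
        intro m
        have hx : (1:ℝ) ≤ (m:ℝ)+1 := le_add_of_nonneg_left (Nat.cast_nonneg m)
        have hx0 : (0:ℝ) < (m:ℝ)+1 := by positivity
        have h := hK m 0
        rw [show (((0:ℕ):ℝ)+1) = (1:ℝ) by norm_num, Real.one_rpow, mul_one] at h
        exact step2 hx one_pos hx (shift hx0 h)
      have := exp_nonpos hb; linarith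
  · rintro ⟨h1, h2, h3⟩
    refine ⟨ENNReal.ofReal (2 ^ |lam|), ENNReal.ofReal_ne_top, fun a => ?_⟩
    refine iSup_le fun n => ?_
    unfold Hop wnorm
    rw [show (1:ℝ)/1 = 1 by norm_num, ENNReal.rpow_one, ← ENNReal.tsum_mul_left]
    refine ENNReal.tsum_le_tsum fun m => ?_
    rw [← ENNReal.ofReal_mul (by positivity : (0:ℝ) ≤ 2 ^ |lam|)]
    apply ENNReal.ofReal_le_ofReal
    have hx : (1:ℝ) ≤ (m:ℝ)+1 := le_add_of_nonneg_left (Nat.cast_nonneg m)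
    have hy : (1:ℝ) ≤ (n:ℝ)+1 := le_add_of_nonneg_left (Nat.cast_nonneg n)
    have hk := key_lem h1 h2 h3 hx hy
    calc ((m:ℝ)+1) ^ mu * ((n:ℝ)+1) ^ nu / (((m:ℝ)+1) + ((n:ℝ)+1)) ^ lam * |a m|
        ≤ (2 ^ |lam| * ((m:ℝ)+1) ^ al) * |a m| :=
          mul_le_mul_of_nonneg_right hk (abs_nonneg _)
      _ = 2 ^ |lam| * (((m:ℝ)+1) ^ al * |a m| ^ (1:ℝ)) := by rw [Real.rpow_one]; ring
end

section
/- Let p > 1 and α, β, μ, ν, λ be real numbers with λ = μ + ν + 1 + (β−α)/p and −pν < β+1 < p(λ−ν). For ε > 0 define f_ε(x) = 0 for 0 < x < 1 and f_ε(x) = ε^{1/p} x^{-(α+1)/p − ε/p} for x ≥ 1. Then ‖f_ε‖_{L^p_α} = 1 and liminf as ε → 0⁺ of ‖H_{λ,μ,ν} f_ε‖_{L^p_β} ≥ B(μ + 1 − (α+1)/p, ν + (β+1)/p). -/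
open MeasureTheory
open scoped ENNReal

/-- Weighted `L^p_θ(ℝ₊)` norm, valued in `ℝ≥0∞`. -/
noncomputable def LNorm (p th : ℝ) (f : ℝ → ℝ) : ℝ≥0∞ :=
  (∫⁻ x in Set.Ioi (0:ℝ), ENNReal.ofReal (|f x| ^ p * x ^ th)) ^ (1 / p)

/-- The Hilbert-type integral operator `H_{λ,μ,ν}`, applied to `|f|`,
valued in `ℝ≥0∞` (the kernel is nonnegative). -/
noncomputable def HInt (lam mu nu : ℝ) (f : ℝ → ℝ) (y : ℝ) : ℝ≥0∞ :=
  ∫⁻ x in Set.Ioi (0:ℝ), ENNReal.ofReal (x ^ mu * y ^ nu / (x + y) ^ lam * |f x|)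

/-- Weighted `L^p_β` norm of `H_{λ,μ,ν} f`. -/
noncomputable def outNormInt (p be lam mu nu : ℝ) (f : ℝ → ℝ) : ℝ≥0∞ :=
  (∫⁻ y in Set.Ioi (0:ℝ), (HInt lam mu nu f y) ^ p * ENNReal.ofReal (y ^ be)) ^ (1 / p)

/-!
Substituting `x = y t` in `H f_ε (y)` and keeping only `t ∈ (δ, R)` gives, for `y ≥ 1/δ`,
`H f_ε (y) ≥ ε^{1/p} R^{-ε/p} y^{-(β+1)/p - ε/p} ∫_δ^R t^{a-1} (1+t)^{-λ} dt` with
`a = μ + 1 - (α+1)/p`: the relation between `λ` and the other exponents makes all powers of `y`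
collapse to one. Raising to the power `p` and integrating against `y^β` over `y > 1/δ`, the factor
`ε` cancels `∫_{1/δ}^∞ y^{-1-ε} dy = δ^ε / ε`, so `‖H f_ε‖ ≥ (δ/R)^{ε/p} ∫_δ^R t^{a-1} (1+t)^{-λ} dt`.
Truncating at `R` turns the whole dependence on `ε` into the factor `(δ/R)^{ε/p} → 1`, so no
convergence theorem is needed; it remains to let `(δ, R)` exhaust `(0, ∞)`.
-/

open MeasureTheory Set Filter Real
open scoped ENNReal Topology

noncomputable def testFn (p al ε : ℝ) (x : ℝ) : ℝ :=
  if x < 1 then 0 else ε ^ (1 / p) * x ^ (-(al + 1) / p - ε / p)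

noncomputable def betaIntegrand (a lam t : ℝ) : ℝ :=
  t ^ (a - 1) / (1 + t) ^ lam

theorem betaIntegrand_nonneg {a lam t : ℝ} (ht : 0 ≤ t) : 0 ≤ betaIntegrand a lam t := by
  unfold betaIntegrand
  positivity

theorem ofReal_betaFn_le_lintegral (a b : ℝ) :
    ENNReal.ofReal (betaFn a b) ≤ ∫⁻ t in Ioi 0, ENNReal.ofReal (betaIntegrand a (a + b) t) :=
  calc ENNReal.ofReal (betaFn a b) ≤ ‖betaFn a b‖ₑ := ofReal_le_enorm _
    _ ≤ ∫⁻ t in Ioi 0, ‖betaIntegrand a (a + b) t‖ₑ := enorm_integral_le_lintegral_enorm _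
    _ = _ := setLIntegral_congr_fun measurableSet_Ioi fun _ ht =>
      enorm_of_nonneg (betaIntegrand_nonneg (mem_Ioi.mp ht).le)

theorem lintegral_Ioi_zero_eq_iSup_Ioo (f : ℝ → ℝ≥0∞) :
    ∫⁻ t in Ioi 0, f t = ⨆ n : ℕ, ∫⁻ t in Ioo ((n + 1 : ℝ)⁻¹) (n + 1), f t := by
  have hunion : ⋃ n : ℕ, Ioo ((n + 1 : ℝ)⁻¹) (n + 1) = Ioi 0 := by
    ext x
    simp only [mem_iUnion, mem_Ioo, mem_Ioi]
    refine ⟨fun ⟨n, hn, _⟩ => lt_trans (by positivity) hn, fun hx => ?_⟩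
    obtain ⟨n, hn⟩ := exists_nat_gt (max x x⁻¹)
    rw [max_lt_iff] at hn
    exact ⟨n, (inv_lt_comm₀ (by positivity) hx).mpr (by linarith), by linarith⟩
  have hmono : Monotone fun n : ℕ => Ioo ((n + 1 : ℝ)⁻¹) (n + 1) := fun m n hmn =>
    Ioo_subset_Ioo (by gcongr) (by gcongr)
  rw [← hunion, setLIntegral_iUnion_of_directed _ hmono.directed_le]

theorem lintegral_Ioi_ofReal_mul_rpow_neg_one_sub {ε c : ℝ} (hε : 0 < ε) (hc : 0 < c) :
    ∫⁻ y in Ioi c, ENNReal.ofReal (ε * y ^ (-1 - ε)) = ENNReal.ofReal (c ^ (-ε)) := by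
  have hexp : -1 - ε < -1 := by linarith
  rw [← ofReal_integral_eq_lintegral_ofReal
      ((integrableOn_Ioi_rpow_of_lt hexp hc).const_mul ε)
      ((ae_restrict_mem measurableSet_Ioi).mono fun y (hy : c < y) => by
        have := hc.trans hy
        positivity),
    integral_const_mul, integral_Ioi_rpow_of_lt hexp hc, show -1 - ε + 1 = -ε by ring]
  congr 1
  field_simp

theorem abs_testFn_rpow_mul_rpow {p al ε x : ℝ} (hp : 0 < p) (hε : 0 ≤ ε) (hx : 1 ≤ x) :
    |testFn p al ε x| ^ p * x ^ al = ε * x ^ (-1 - ε) := by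
  have hx0 : 0 < x := by linarith
  rw [testFn, if_neg (not_lt.mpr hx), abs_of_nonneg (by positivity),
    mul_rpow (by positivity) (by positivity), ← rpow_mul hε, ← rpow_mul hx0.le,
    one_div_mul_cancel hp.ne', rpow_one, mul_assoc, ← rpow_add hx0]
  congr 2
  field_simp
  ring

theorem LNorm_testFn {p al ε : ℝ} (hp : 0 < p) (hε : 0 < ε) :
    LNorm p al (testFn p al ε) = 1 := by
  have hpt : ∀ x ∈ Ioi (0 : ℝ), ENNReal.ofReal (|testFn p al ε x| ^ p * x ^ al)
      = (Ici 1).indicator (fun x => ENNReal.ofReal (ε * x ^ (-1 - ε))) x := by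
    intro x _
    by_cases hx : x ∈ Ici 1
    · rw [indicator_of_mem hx, abs_testFn_rpow_mul_rpow hp hε.le hx]
    · rw [indicator_of_notMem hx, testFn, if_pos (not_le.mp hx), abs_zero, zero_rpow hp.ne',
        zero_mul, ENNReal.ofReal_zero]
  rw [LNorm, setLIntegral_congr_fun measurableSet_Ioi hpt, lintegral_indicator measurableSet_Ici,
    Measure.restrict_restrict measurableSet_Ici, inter_eq_left.mpr (Ici_subset_Ioi.mpr one_pos),
    setLIntegral_congr Ioi_ae_eq_Ici.symm, lintegral_Ioi_ofReal_mul_rpow_neg_one_sub hε one_pos,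
    one_rpow, ENNReal.ofReal_one, ENNReal.one_rpow]

theorem mul_kernel_mul_abs_testFn {p al be lam mu nu ε y t : ℝ} (hp : p ≠ 0) (hε : 0 ≤ ε)
    (hlam : lam = mu + nu + 1 + (be - al) / p) (hy : 0 < y) (ht : 0 < t) (hyt : 1 ≤ y * t) :
    y * ((y * t) ^ mu * y ^ nu / (y * t + y) ^ lam * |testFn p al ε (y * t)|)
      = ε ^ (1 / p) * y ^ (-(be + 1) / p - ε / p) * t ^ (-ε / p)
        * betaIntegrand (mu + 1 - (al + 1) / p) lam t := by
  have hy_exp : y ^ (-(be + 1) / p - ε / p)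
      = y * y ^ mu * y ^ nu * y ^ (-(al + 1) / p - ε / p) / y ^ lam := by
    rw [show -(be + 1) / p - ε / p = 1 + mu + nu + (-(al + 1) / p - ε / p) - lam by
        rw [hlam]; field_simp; ring,
      rpow_sub hy, rpow_add hy, rpow_add hy, rpow_add hy, rpow_one]
  have ht_exp : t ^ (-ε / p) * t ^ (mu + 1 - (al + 1) / p - 1)
      = t ^ mu * t ^ (-(al + 1) / p - ε / p) := by
    rw [← rpow_add ht, ← rpow_add ht]
    ring_nf
  rw [testFn, if_neg (not_lt.mpr hyt), abs_of_nonneg (by positivity), betaIntegrand,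
    show y * t + y = y * (1 + t) by ring, mul_rpow hy.le ht.le, mul_rpow hy.le ht.le,
    mul_rpow hy.le (by positivity), hy_exp, mul_div_assoc', mul_assoc _ (t ^ (-ε / p)),
    ← mul_div_assoc, ht_exp]
  field_simp

theorem le_HInt_testFn {p al be lam mu nu ε δ y : ℝ} (hp : 0 < p) (hε : 0 ≤ ε)
    (hlam : lam = mu + nu + 1 + (be - al) / p) (hδ : 0 < δ) (hyδ : 1 ≤ y * δ) (R : ℝ) :
    ENNReal.ofReal (ε ^ (1 / p) * y ^ (-(be + 1) / p - ε / p) * R ^ (-ε / p)) *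
        ∫⁻ t in Ioo δ R, ENNReal.ofReal (betaIntegrand (mu + 1 - (al + 1) / p) lam t)
      ≤ HInt lam mu nu (testFn p al ε) y := by
  have hy : 0 < y := pos_of_mul_pos_left (one_pos.trans_le hyδ) hδ.le
  set F : ℝ → ℝ≥0∞ := fun x =>
    ENNReal.ofReal (x ^ mu * y ^ nu / (x + y) ^ lam * |testFn p al ε x|)
  have hpt : ∀ t ∈ Ioo δ R,
      ENNReal.ofReal (ε ^ (1 / p) * y ^ (-(be + 1) / p - ε / p) * R ^ (-ε / p)) *
          ENNReal.ofReal (betaIntegrand (mu + 1 - (al + 1) / p) lam t)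
        ≤ ENNReal.ofReal |y * 1| * F (y * t) := by
    rintro t ⟨hδt, htR⟩
    have ht : 0 < t := hδ.trans hδt
    have hyt : 1 ≤ y * t := hyδ.trans (by gcongr)
    have hR : R ^ (-ε / p) ≤ t ^ (-ε / p) :=
      rpow_le_rpow_of_nonpos ht htR.le (div_nonpos_of_nonpos_of_nonneg (by linarith) hp.le)
    rw [← ENNReal.ofReal_mul' (betaIntegrand_nonneg ht.le), ← ENNReal.ofReal_mul (abs_nonneg _),
      mul_one, abs_of_pos hy, mul_kernel_mul_abs_testFn hp.ne' hε hlam hy ht hyt]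
    gcongr
    exact betaIntegrand_nonneg ht.le
  calc _ = ∫⁻ t in Ioo δ R,
        ENNReal.ofReal (ε ^ (1 / p) * y ^ (-(be + 1) / p - ε / p) * R ^ (-ε / p)) *
          ENNReal.ofReal (betaIntegrand (mu + 1 - (al + 1) / p) lam t) :=
        (lintegral_const_mul' _ _ ENNReal.ofReal_ne_top).symm
    _ ≤ ∫⁻ t in Ioo δ R, ENNReal.ofReal |y * 1| * F (y * t) :=
        setLIntegral_mono' measurableSet_Ioo hpt
    _ = ∫⁻ x in (y * ·) '' Ioo δ R, F x :=
        (lintegral_image_eq_lintegral_abs_deriv_mul measurableSet_Ioo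
          (fun t _ => ((hasDerivAt_id t).const_mul y).hasDerivWithinAt)
          (mul_right_injective₀ hy.ne').injOn F).symm
    _ ≤ HInt lam mu nu (testFn p al ε) y := by
        rw [image_mul_left_Ioo hy]
        exact lintegral_mono_set fun x hx => (mul_pos hy hδ).trans hx.1

theorem le_outNormInt_testFn {p al be lam mu nu ε δ R : ℝ} (hp : 0 < p) (hε : 0 < ε)
    (hlam : lam = mu + nu + 1 + (be - al) / p) (hδ : 0 < δ) (hR : 0 < R) :
    ENNReal.ofReal ((δ / R) ^ (ε / p)) *
        ∫⁻ t in Ioo δ R, ENNReal.ofReal (betaIntegrand (mu + 1 - (al + 1) / p) lam t)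
      ≤ outNormInt p be lam mu nu (testFn p al ε) := by
  set I := ∫⁻ t in Ioo δ R, ENNReal.ofReal (betaIntegrand (mu + 1 - (al + 1) / p) lam t)
  have hweight : ∀ y > 0,
      (ε ^ (1 / p) * y ^ (-(be + 1) / p - ε / p) * R ^ (-ε / p)) ^ p * y ^ be
        = R ^ (-ε) * (ε * y ^ (-1 - ε)) := by
    intro y hy
    rw [mul_rpow (by positivity) (by positivity), mul_rpow (by positivity) (by positivity),
      ← rpow_mul hε.le, ← rpow_mul hy.le, ← rpow_mul hR.le, one_div_mul_cancel hp.ne', rpow_one,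
      show (-(be + 1) / p - ε / p) * p = -1 - ε - be by field_simp; ring,
      show -ε / p * p = -ε by field_simp, rpow_sub hy]
    field_simp
  have hconst : R ^ (-ε) * δ⁻¹ ^ (-ε) = (δ / R) ^ ε := by
    rw [inv_rpow hδ.le, rpow_neg hδ.le, inv_inv, div_rpow hδ.le hR.le, rpow_neg hR.le]
    ring
  have hpow : ENNReal.ofReal ((δ / R) ^ ε) * I ^ p
      ≤ ∫⁻ y in Ioi 0, HInt lam mu nu (testFn p al ε) y ^ p * ENNReal.ofReal (y ^ be) :=
    calc ENNReal.ofReal ((δ / R) ^ ε) * I ^ p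
        = ∫⁻ y in Ioi δ⁻¹, ENNReal.ofReal (R ^ (-ε) * (ε * y ^ (-1 - ε))) * I ^ p := by
          rw [lintegral_mul_const _ (by fun_prop)]
          simp_rw [ENNReal.ofReal_mul (rpow_nonneg hR.le _)]
          rw [lintegral_const_mul' _ _ ENNReal.ofReal_ne_top,
            lintegral_Ioi_ofReal_mul_rpow_neg_one_sub hε (inv_pos.mpr hδ),
            ← ENNReal.ofReal_mul (by positivity), hconst]
      _ ≤ ∫⁻ y in Ioi δ⁻¹, HInt lam mu nu (testFn p al ε) y ^ p * ENNReal.ofReal (y ^ be) := by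
          refine setLIntegral_mono' measurableSet_Ioi fun y (hy : δ⁻¹ < y) => ?_
          have hy0 : 0 < y := (inv_pos.mpr hδ).trans hy
          rw [← hweight y hy0, ENNReal.ofReal_mul (by positivity),
            ← ENNReal.ofReal_rpow_of_nonneg (by positivity) hp.le, mul_right_comm,
            ← ENNReal.mul_rpow_of_nonneg _ _ hp.le]
          gcongr
          exact le_HInt_testFn hp hε.le hlam hδ ((inv_le_iff_one_le_mul₀ hδ).mp hy.le) R
      _ ≤ _ := lintegral_mono_set (Ioi_subset_Ioi (inv_pos.mpr hδ).le)
  calc ENNReal.ofReal ((δ / R) ^ (ε / p)) * I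
      = (ENNReal.ofReal ((δ / R) ^ ε) * I ^ p) ^ (1 / p) := by
        rw [ENNReal.mul_rpow_of_nonneg _ _ (by positivity),
          ENNReal.ofReal_rpow_of_nonneg (by positivity) (by positivity), ← rpow_mul (by positivity),
          ← ENNReal.rpow_mul, mul_one_div_cancel hp.ne', ENNReal.rpow_one, mul_one_div]
    _ ≤ outNormInt p be lam mu nu (testFn p al ε) := ENNReal.rpow_le_rpow hpow (by positivity)

theorem setLIntegral_Ioo_le_liminf_outNormInt {p al be lam mu nu δ R : ℝ} (hp : 0 < p)
    (hlam : lam = mu + nu + 1 + (be - al) / p) (hδ : 0 < δ) (hR : 0 < R) :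
    ∫⁻ t in Ioo δ R, ENNReal.ofReal (betaIntegrand (mu + 1 - (al + 1) / p) lam t)
      ≤ liminf (fun ε => outNormInt p be lam mu nu (testFn p al ε)) (𝓝[>] 0) := by
  set I := ∫⁻ t in Ioo δ R, ENNReal.ofReal (betaIntegrand (mu + 1 - (al + 1) / p) lam t)
  have hfactor : Tendsto (fun ε : ℝ => (δ / R) ^ (ε / p)) (𝓝[>] 0) (𝓝 1) := by
    have h : Tendsto (fun ε : ℝ => (δ / R) ^ (ε / p)) (𝓝 0) (𝓝 ((δ / R) ^ ((0 : ℝ) / p))) :=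
      tendsto_const_nhds.rpow (tendsto_id.div_const p) (Or.inl (div_pos hδ hR).ne')
    simpa using h.mono_left nhdsWithin_le_nhds
  have hlim : Tendsto (fun ε : ℝ => ENNReal.ofReal ((δ / R) ^ (ε / p)) * I) (𝓝[>] 0) (𝓝 I) := by
    simpa using ENNReal.Tendsto.mul_const (ENNReal.tendsto_ofReal hfactor) (Or.inl (by simp))
  calc I = liminf (fun ε : ℝ => ENNReal.ofReal ((δ / R) ^ (ε / p)) * I) (𝓝[>] 0) :=
        hlim.liminf_eq.symm
    _ ≤ _ := liminf_le_liminf (eventually_nhdsWithin_of_forall fun _ hε =>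
        le_outNormInt_testFn hp hε hlam hδ hR)

theorem stmt_19_general (p al be lam mu nu : ℝ) (hp : 1 < p)
    (hlam : lam = mu + nu + 1 + (be - al) / p) :
    (∀ ε : ℝ, 0 < ε →
        LNorm p al
          (fun x : ℝ => if x < 1 then 0 else ε ^ (1 / p) * x ^ (-(al + 1) / p - ε / p)) = 1) ∧
      ENNReal.ofReal (betaFn (mu + 1 - (al + 1) / p) (nu + (be + 1) / p)) ≤
        Filter.liminf
          (fun ε : ℝ =>
            outNormInt p be lam mu nu
              (fun x : ℝ => if x < 1 then 0 else ε ^ (1 / p) * x ^ (-(al + 1) / p - ε / p)))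
          (nhdsWithin 0 (Set.Ioi 0)) := by
  have hp0 : 0 < p := by linarith
  refine ⟨fun ε hε => LNorm_testFn hp0 hε, ?_⟩
  have hab : mu + 1 - (al + 1) / p + (nu + (be + 1) / p) = lam := by
    rw [hlam]
    field_simp
    ring
  calc ENNReal.ofReal (betaFn (mu + 1 - (al + 1) / p) (nu + (be + 1) / p))
      ≤ ∫⁻ t in Ioi 0, ENNReal.ofReal (betaIntegrand (mu + 1 - (al + 1) / p) lam t) :=
        hab ▸ ofReal_betaFn_le_lintegral _ _
    _ = ⨆ n : ℕ, ∫⁻ t in Ioo ((n + 1 : ℝ)⁻¹) (n + 1),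
          ENNReal.ofReal (betaIntegrand (mu + 1 - (al + 1) / p) lam t) :=
        lintegral_Ioi_zero_eq_iSup_Ioo _
    _ ≤ _ := iSup_le fun _ =>
        setLIntegral_Ioo_le_liminf_outNormInt hp0 hlam (by positivity) (by positivity)

theorem stmt_19 (p al be lam mu nu : ℝ) (hp : 1 < p)
    (hlam : lam = mu + nu + 1 + (be - al) / p)
    (h1 : -p * nu < be + 1) (h2 : be + 1 < p * (lam - nu)) :
    (∀ ε : ℝ, 0 < ε →
        LNorm p al
          (fun x : ℝ => if x < 1 then 0 else ε ^ (1 / p) * x ^ (-(al + 1) / p - ε / p)) = 1) ∧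
      ENNReal.ofReal (betaFn (mu + 1 - (al + 1) / p) (nu + (be + 1) / p)) ≤
        Filter.liminf
          (fun ε : ℝ =>
            outNormInt p be lam mu nu
              (fun x : ℝ => if x < 1 then 0 else ε ^ (1 / p) * x ^ (-(al + 1) / p - ε / p)))
          (nhdsWithin 0 (Set.Ioi 0)) :=
  stmt_19_general p al be lam mu nu hp hlam
end
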